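/- arXiv:2402.10827 — 8 statements merged into one kernel-verified Lean document; each statement's English description precedes it below -/
import Mathlib

section
/- For every a > 0 and every y ∈ l₁, one has β_a ∈ J(y) if and only if y ∈ Δ_a; that is, J⁻¹(β_a) = Δ_a. -/
open scoped ENNReal

/-- The real Banach space `ℓ¹` of absolutely summable real sequences. -/
noncomputable abbrev ell1 : Type := lp (fun _ : ℕ => ℝ) 1

/-- The real Banach space `ℓ∞` of bounded real sequences (the dual of `ℓ¹`). -/
noncomputable abbrev ellInfty : Type := lp (fun _ : ℕ => ℝ) ∞

/-- The canonical pairing `⟨φ, x⟩ = ∑ₙ φₙ xₙ` between `ℓ∞` and `ℓ¹`. -/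
noncomputable def pairing (φ : ellInfty) (x : ell1) : ℝ := ∑' n, φ n * x n

/-- The constant sequence `β_a = (a, a, a, …) ∈ ℓ∞`. -/
noncomputable def betaSeq (a : ℝ) : ellInfty :=
  ⟨fun _ => a, memℓp_infty (bddAbove_singleton.mono Set.range_const_subset)⟩

/-- The set of best approximations of `x` from the closed ball of radius `r`
centered at the origin of `ℓ¹`: `P_{rB}(x) = {u ∈ rB : ‖x − u‖₁ ≤ ‖x − z‖₁ for all z ∈ rB}`. -/
def projBall (r : ℝ) (x : ell1) : Set ell1 :=
  {u : ell1 | ‖u‖ ≤ r ∧ ∀ z : ell1, ‖z‖ ≤ r → ‖x - u‖ ≤ ‖x - z‖}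

/-- `ψ` belongs to the Mordukhovich (Fréchet) coderivative `D̂*P(x, y)(φ)` of the set-valued map
`P : ℓ¹ ⇉ ℓ¹` at `(x, y)` evaluated at `φ`:
`limsup_{(u,v)→(x,y), v ∈ P(u)} (⟨ψ, u − x⟩ − ⟨φ, v − y⟩)/(‖u − x‖ + ‖v − y‖) ≤ 0`. -/
def inCoderiv (P : ell1 → Set ell1) (x y : ell1) (ψ φ : ellInfty) : Prop :=
  ∀ ε > (0 : ℝ), ∃ δ > (0 : ℝ), ∀ u v : ell1, v ∈ P u → ‖u - x‖ < δ → ‖v - y‖ < δ →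
    pairing ψ (u - x) - pairing φ (v - y) ≤ ε * (‖u - x‖ + ‖v - y‖)

/-- Proposition 3.1 (a). For every `a > 0` and every `y ∈ ℓ¹`,
`β_a ∈ J(y)` if and only if `y ∈ Δ_a`; that is, `J⁻¹(β_a) = Δ_a`. -/
theorem stmt_1 (a : ℝ) (ha : 0 < a) (y : ell1) :
    (pairing (betaSeq a) y = ‖y‖ ^ 2 ∧ ‖y‖ ^ 2 = ‖betaSeq a‖ ^ 2) ↔
      ((∀ n, 0 ≤ y n) ∧ ∑' n, y n = a) := by
  have habs : Summable fun n => |y n| := by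
    have := (lp.memℓp y).summable (p := 1) (by norm_num)
    simpa using this
  have hy : Summable (fun n => y n) := by
    have := habs.of_abs
    simpa using this
  have hnorm : ‖y‖ = ∑' n, |y n| := by
    have := lp.norm_eq_tsum_rpow (p := 1) (by norm_num) y
    simpa using this
  have hbeta : ‖betaSeq a‖ = a := by
    have : ‖betaSeq a‖ = ⨆ _ : ℕ, ‖a‖ := lp.norm_eq_ciSup _
    rw [this, ciSup_const, Real.norm_eq_abs, abs_of_pos ha]
  have hpair : pairing (betaSeq a) y = a * ∑' n, y n := by
    unfold pairing
    calc (∑' n, (betaSeq a) n * y n) = ∑' n, a * y n := rfl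
    _ = a * ∑' n, y n := tsum_mul_left
  constructor
  · rintro ⟨h1, h2⟩
    have hN : 0 ≤ ‖y‖ := norm_nonneg _
    have hNa : ‖y‖ = a := by
      rw [hbeta] at h2
      nlinarith
    have hS : ∑' n, y n = a := by
      rw [hpair, hNa] at h1
      have := h1
      field_simp at this
      nlinarith
    have heq : (∑' n, y n) = ∑' n, |y n| := by
      rw [hS, ← hNa, hnorm]
    have hpos : ∀ n, 0 ≤ y n := by
      intro n
      by_contra hneg
      push_neg at hneg
      have hlt : y n < |y n| := lt_of_lt_of_le hneg (by positivity)
      have : (∑' n, y n) < ∑' n, |y n| :=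
        Summable.tsum_lt_tsum (fun m => le_abs_self (y m)) hlt hy habs
      exact absurd heq (ne_of_lt this)
    exact ⟨hpos, hS⟩
  · rintro ⟨hpos, hS⟩
    have hNa : ‖y‖ = a := by
      rw [hnorm]
      rw [show (fun n => |y n|) = fun n => y n from funext fun n => abs_of_nonneg (hpos n)]
      exact hS
    refine ⟨?_, ?_⟩
    · rw [hpair, hS, hNa]; ring
    · rw [hNa, hbeta]
end

section
/- For every a > 0 and every y ∈ Δ_a⁺, one has J(y) = {β_a}; that is, the only φ ∈ l∞ satisfying ⟨φ, y⟩ = ‖y‖₁² = ‖φ‖∞² is the constant sequence β_a. -/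
open scoped ENNReal

/-!
A bounded sequence with `‖φ‖∞ = a` has all entries `φₙ ≤ a`, so pairing it with a strictly positive
`y` of sum `a` gives `⟨φ, y⟩ ≤ a²`, with equality only if `φₙ = a` for every `n`.
-/

section

variable {ι : Type*}

theorem lp.norm_one_eq_tsum_of_nonneg {x : lp (fun _ : ι => ℝ) 1} (hx : ∀ i, 0 ≤ x i) :
    ‖x‖ = ∑' i, x i := by
  rw [lp.norm_eq_tsum_rpow (by norm_num)]
  simp only [ENNReal.toReal_one, Real.rpow_one, div_one, Real.norm_of_nonneg (hx _)]

theorem lp.summable_mul_infty_one (φ : lp (fun _ : ι => ℝ) ∞) (x : lp (fun _ : ι => ℝ) 1) :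
    Summable fun i => φ i * x i := by
  refine .of_norm_bounded ((Memℓp.summable_of_one x.2).norm.mul_left ‖φ‖) fun i => ?_
  rw [norm_mul]
  exact mul_le_mul_of_nonneg_right (lp.norm_apply_le_norm ENNReal.top_ne_zero φ i) (norm_nonneg _)

theorem eq_of_le_of_tsum_mul_eq {f w : ι → ℝ} {c : ℝ} (hw : ∀ i, 0 < w i)
    (hfw : Summable fun i => f i * w i) (hw_sum : Summable w) (hf : ∀ i, f i ≤ c)
    (h : ∑' i, f i * w i = c * ∑' i, w i) (i : ι) : f i = c := by
  by_contra hi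
  have hlt : ∑' j, f j * w j < ∑' j, c * w j :=
    hfw.tsum_lt_tsum (fun j => mul_le_mul_of_nonneg_right (hf j) (hw j).le)
      (mul_lt_mul_of_pos_right (lt_of_le_of_ne (hf i) hi) (hw i)) (hw_sum.mul_left c)
  rw [tsum_mul_left] at hlt
  exact hlt.ne h

end

theorem norm_betaSeq (a : ℝ) : ‖betaSeq a‖ = |a| := by
  simp [lp.norm_eq_ciSup, betaSeq]

theorem pairing_betaSeq (a : ℝ) (x : ell1) : pairing (betaSeq a) x = a * ∑' n, x n :=
  tsum_mul_left

theorem stmt_2_general (a : ℝ) (y : ell1)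
    (hy_pos : ∀ n, 0 < y n) (hy_sum : ∑' n, y n = a) :
    ∀ φ : ellInfty,
      (pairing φ y = ‖y‖ ^ 2 ∧ ‖y‖ ^ 2 = ‖φ‖ ^ 2) ↔ φ = betaSeq a := by
  intro φ
  have hy : ‖y‖ = a := (lp.norm_one_eq_tsum_of_nonneg fun n => (hy_pos n).le).trans hy_sum
  have ha : 0 ≤ a := hy ▸ norm_nonneg y
  constructor
  · rintro ⟨hpair, hnorm⟩
    have hφ : ‖φ‖ = a := by
      rw [hy] at hnorm
      exact ((pow_left_inj₀ ha (norm_nonneg φ) two_ne_zero).1 hnorm).symm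
    have hle : ∀ n, φ n ≤ a := fun n =>
      (le_abs_self _).trans (hφ ▸ lp.norm_apply_le_norm ENNReal.top_ne_zero φ n)
    refine Subtype.ext (funext fun n => eq_of_le_of_tsum_mul_eq hy_pos
      (lp.summable_mul_infty_one φ y) (Memℓp.summable_of_one y.2) hle ?_ n)
    rw [hy_sum, ← sq, ← hy]
    exact hpair
  · rintro rfl
    rw [pairing_betaSeq, norm_betaSeq, hy_sum, hy, abs_of_nonneg ha, sq]
    exact ⟨rfl, rfl⟩

/-- Proposition 3.1 (b). For every `a > 0` and every `y ∈ Δ_a⁺`,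
`J(y) = {β_a}`: the only `φ ∈ ℓ∞` with `⟨φ, y⟩ = ‖y‖₁² = ‖φ‖∞²` is the constant sequence `β_a`. -/
theorem stmt_2 (a : ℝ) (ha : 0 < a) (y : ell1)
    (hy_pos : ∀ n, 0 < y n) (hy_sum : ∑' n, y n = a) :
    ∀ φ : ellInfty,
      (pairing φ y = ‖y‖ ^ 2 ∧ ‖y‖ ^ 2 = ‖φ‖ ^ 2) ↔ φ = betaSeq a :=
  stmt_2_general a y hy_pos hy_sum
end

section
/- Let r > 0 and let x ∈ K₁ with ‖x‖₁ > r. Then P_{rB}(x) = [θ, x]_{≼₁} ∩ Δ_r, i.e., a point y ∈ l₁ is a best approximation of x from the ball rB if and only if 0 ≤ yₙ ≤ xₙ for every coordinate n and ∑ₙ yₙ = r. -/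
open scoped ENNReal

lemma ell1_hasSum_abs (f : ell1) : HasSum (fun n => |f n|) ‖f‖ := by
  have := lp.hasSum_norm (p := (1 : ℝ≥0∞)) (by norm_num) f
  simpa using this

lemma ell1_norm_eq_tsum (f : ell1) : ‖f‖ = ∑' n, |f n| :=
  (ell1_hasSum_abs f).tsum_eq.symm

/-- If `0 ≤ y ≤ x` coordinatewise and `∑ y = r`, then `‖y‖ = r` and `‖x - y‖ = ‖x‖ - r`. -/
lemma aux_norms (r : ℝ) (x y : ell1) (hx_nonneg : ∀ n, 0 ≤ x n)
    (h1 : ∀ n, 0 ≤ y n ∧ y n ≤ x n) (h2 : ∑' n, y n = r) :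
    ‖y‖ = r ∧ ‖x - y‖ = ‖x‖ - r := by
  have hy : ‖y‖ = r := by
    rw [ell1_norm_eq_tsum, ← h2]
    congr 1; ext n; exact abs_of_nonneg (h1 n).1
  refine ⟨hy, ?_⟩
  have hxsum : HasSum (fun n => x n) ‖x‖ := by
    have := ell1_hasSum_abs x
    simpa [fun n => abs_of_nonneg (hx_nonneg n)] using this
  have hysum : HasSum (fun n => y n) r := by
    have := ell1_hasSum_abs y
    rw [hy] at this
    simpa [fun n => abs_of_nonneg (h1 n).1] using this
  have hxy : HasSum (fun n => |(x - y) n|) (‖x‖ - r) := by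
    have h := hxsum.sub hysum
    have : (fun n => |(x - y) n|) = fun n => x n - y n := by
      ext n
      rw [lp.coeFn_sub, Pi.sub_apply]
      exact abs_of_nonneg (sub_nonneg.2 (h1 n).2)
    rw [this]; exact h
  exact (ell1_hasSum_abs (x - y)).unique hxy

/-- Proposition 3.3 (a). Let `r > 0` and `x ∈ K₁` with `‖x‖₁ > r`. Then
`P_{rB}(x) = [θ, x]_{≼₁} ∩ Δ_r`: a point `y ∈ ℓ¹` is a best approximation of `x` from the
ball `rB` if and only if `0 ≤ yₙ ≤ xₙ` for every `n` and `∑ₙ yₙ = r`. -/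
theorem stmt_4 (r : ℝ) (hr : 0 < r) (x : ell1) (hx_nonneg : ∀ n, 0 ≤ x n)
    (hx : r < ‖x‖) :
    ∀ y : ell1,
      y ∈ projBall r x ↔ ((∀ n, 0 ≤ y n ∧ y n ≤ x n) ∧ ∑' n, y n = r) := by
  have hxpos : (0 : ℝ) < ‖x‖ := lt_trans hr hx
  intro y
  constructor
  · rintro ⟨hy_le, hy_best⟩
    -- construct witness y₀ = (r/‖x‖) • x
    set t : ℝ := r / ‖x‖ with ht
    have ht0 : 0 ≤ t := div_nonneg hr.le hxpos.le
    have ht1 : t ≤ 1 := (div_le_one hxpos).2 hx.le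
    set y₀ : ell1 := t • x with hy₀
    have hy₀coe : ∀ n, y₀ n = t * x n := fun n => by
      rw [hy₀, lp.coeFn_smul, Pi.smul_apply, smul_eq_mul]
    have h1₀ : ∀ n, 0 ≤ y₀ n ∧ y₀ n ≤ x n := by
      intro n
      rw [hy₀coe n]
      constructor
      · exact mul_nonneg ht0 (hx_nonneg n)
      · nlinarith [hx_nonneg n, mul_le_of_le_one_left (hx_nonneg n) ht1]
    have hxsum : HasSum (fun n => x n) ‖x‖ := by
      have := ell1_hasSum_abs x
      simpa [fun n => abs_of_nonneg (hx_nonneg n)] using this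
    have h2₀ : ∑' n, y₀ n = r := by
      have : HasSum (fun n => y₀ n) (t * ‖x‖) := by
        have := hxsum.mul_left t
        simpa [hy₀coe] using this
      rw [this.tsum_eq, ht]
      field_simp
    obtain ⟨hn₀, hd₀⟩ := aux_norms r x y₀ hx_nonneg h1₀ h2₀
    -- y is at distance ≤ ‖x‖ - r
    have hle : ‖x - y‖ ≤ ‖x‖ - r := by
      have := hy_best y₀ (le_of_eq hn₀)
      linarith
    have hge : ‖x‖ - ‖y‖ ≤ ‖x - y‖ := by
      have := norm_sub_norm_le x y
      linarith [abs_le.1 (abs_norm_sub_norm_le x y)]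
    have hynorm : ‖y‖ = r := le_antisymm hy_le (by linarith)
    have heq : ‖x - y‖ = ‖x‖ - r := le_antisymm hle (by linarith [hynorm])
    -- coordinatewise: |x n - y n| + |y n| - |x n| = 0
    have hsx := ell1_hasSum_abs x
    have hsy := ell1_hasSum_abs y
    have hsxy := ell1_hasSum_abs (x - y)
    have hg : HasSum (fun n => |(x - y) n| + |y n| - |x n|) 0 := by
      have h := (hsxy.add hsy).sub hsx
      rw [heq, hynorm] at h
      simpa using h
    have hg0 : ∀ n, |(x - y) n| + |y n| - |x n| = 0 := by
      have hnn : ∀ n, 0 ≤ |(x - y) n| + |y n| - |x n| := by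
        intro n
        have : |x n| ≤ |(x - y) n| + |y n| := by
          rw [lp.coeFn_sub, Pi.sub_apply]
          calc |x n| = |(x n - y n) + y n| := by ring_nf
          _ ≤ |x n - y n| + |y n| := abs_add_le _ _
        linarith
      intro n
      have htsum0 : ∑' n, (|(x - y) n| + |y n| - |x n|) = 0 := hg.tsum_eq
      by_contra hne
      have hpos : 0 < |(x - y) n| + |y n| - |x n| := lt_of_le_of_ne (hnn n) (Ne.symm hne)
      have := hg.summable
      have hle' := Summable.le_tsum this n (fun m _ => hnn m)
      rw [htsum0] at hle'
      linarith
    have hcoord : ∀ n, 0 ≤ y n ∧ y n ≤ x n := by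
      intro n
      have h0 := hg0 n
      rw [lp.coeFn_sub, Pi.sub_apply] at h0
      have hxn := abs_of_nonneg (hx_nonneg n)
      rw [hxn] at h0
      -- |x n - y n| + |y n| = x n
      rcases le_or_gt 0 (y n) with hyn | hyn
      · constructor
        · exact hyn
        · have := abs_nonneg (x n - y n)
          rw [abs_of_nonneg hyn] at h0
          cases abs_cases (x n - y n) with
          | inl h => linarith [h.1]
          | inr h => linarith [h.1]
      · exfalso
        rw [abs_of_neg hyn] at h0
        have : |x n - y n| = x n - y n := abs_of_nonneg (by linarith [hx_nonneg n])
        linarith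
    refine ⟨hcoord, ?_⟩
    have : HasSum (fun n => y n) ‖y‖ := by
      have := hsy
      simpa [fun n => abs_of_nonneg (hcoord n).1] using this
    rw [this.tsum_eq, hynorm]
  · rintro ⟨h1, h2⟩
    obtain ⟨hn, hd⟩ := aux_norms r x y hx_nonneg h1 h2
    refine ⟨le_of_eq hn, fun z hz => ?_⟩
    rw [hd]
    have : ‖x‖ - ‖z‖ ≤ ‖x - z‖ := by
      linarith [abs_le.1 (abs_norm_sub_norm_le x z)]
    linarith
end

section
/- Let r > 0 and let x ∈ K₁ with ‖x‖₁ > r. Then P_{rB}(x) is a singleton if and only if x is an axis point of l₁; in that case, if x = s(m, ‖x‖₁) for some positive integer m, then P_{rB}(x) = {s(m, r)}. Moreover, if x is not an axis point, then P_{rB}(x) contains infinitely many elements. -/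
open scoped ENNReal

/-
For `x ≥ 0` with `‖x‖₁ > r`, the distance from `x` to `rB` is `‖x‖₁ - r`, attained at `(r/‖x‖₁) x`.
Since `|xₙ - uₙ| ≥ xₙ - |uₙ|` coordinatewise with equality iff `0 ≤ uₙ ≤ xₙ`, the nearest points
are exactly the `u` with `0 ≤ u ≤ x` and `‖u‖₁ = r`. If `x = s(m, b)` this box is a segment on the
`m`-th axis and only `s(m, r)` qualifies; otherwise `x` has two positive coordinates `i ≠ j`, and
moving a small mass `t` from coordinate `j` to coordinate `i` of `(r/‖x‖₁) x` gives a different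
nearest point for each small `t > 0`.
-/

theorem abs_sub_le_sub_abs_iff {a b : ℝ} : |a - b| ≤ a - |b| ↔ 0 ≤ b ∧ b ≤ a := by
  constructor
  · intro h
    constructor <;> cases abs_cases b <;> cases abs_cases (a - b) <;> linarith
  · rintro ⟨hb, hba⟩
    rw [abs_of_nonneg hb, abs_of_nonneg (sub_nonneg.2 hba)]

section lpOne

variable {ι : Type*}

theorem lp.norm_one_eq_tsum_abs (f : lp (fun _ : ι => ℝ) 1) : ‖f‖ = ∑' n, |f n| := by
  simpa [Real.norm_eq_abs] using lp.norm_eq_tsum_rpow (p := 1) (by norm_num) f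

theorem lp.summable_abs_one (f : lp (fun _ : ι => ℝ) 1) : Summable fun n => |f n| := by
  simpa [Real.norm_eq_abs] using (lp.memℓp f).summable (p := 1) (by norm_num)

theorem lp.hasSum_one_of_nonneg {f : lp (fun _ : ι => ℝ) 1} (hf : ∀ n, 0 ≤ f n) :
    HasSum (fun n => f n) ‖f‖ := by
  have hsum := lp.summable_abs_one f
  have hnorm := lp.norm_one_eq_tsum_abs f
  simp only [abs_of_nonneg (hf _)] at hsum hnorm
  exact hnorm ▸ hsum.hasSum

theorem lp.norm_sub_le_norm_sub_norm_iff {x u : lp (fun _ : ι => ℝ) 1} (hx : ∀ n, 0 ≤ x n) :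
    ‖x - u‖ ≤ ‖x‖ - ‖u‖ ↔ ∀ n, 0 ≤ u n ∧ u n ≤ x n := by
  have hx_sum := lp.hasSum_one_of_nonneg hx
  have hbound := hx_sum.summable.sub (lp.summable_abs_one u)
  have hdiff_sum : Summable fun n => |x n - u n| := by simpa using lp.summable_abs_one (x - u)
  have hterm : ∀ n, x n - |u n| ≤ |x n - u n| := fun n => by
    simpa [abs_of_nonneg (hx n)] using abs_sub_abs_le_abs_sub (x n) (u n)
  have hdiff : ‖x - u‖ = ∑' n, |x n - u n| := by simp [lp.norm_one_eq_tsum_abs]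
  rw [hdiff, ← hx_sum.tsum_eq, lp.norm_one_eq_tsum_abs u,
    ← hx_sum.summable.tsum_sub (lp.summable_abs_one u)]
  simp only [← abs_sub_le_sub_abs_iff]
  constructor
  · intro h
    by_contra! ⟨n, hn⟩
    linarith [hbound.tsum_lt_tsum hterm hn hdiff_sum]
  · exact fun h => hdiff_sum.tsum_le_tsum h hbound

theorem lp.eq_single_of_apply_eq_zero {x : lp (fun _ : ι => ℝ) 1} {i : ι} [DecidableEq ι]
    (h : ∀ j ≠ i, x j = 0) : x = lp.single 1 i (x i) := by
  ext j
  rcases eq_or_ne j i with rfl | hj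
  · simp
  · simp [h j hj, hj]

end lpOne

theorem mem_projBall_iff_of_lt_norm {r : ℝ} (hr : 0 ≤ r) {x : ell1} (hx : r < ‖x‖) {u : ell1} :
    u ∈ projBall r x ↔ ‖u‖ ≤ r ∧ ‖x - u‖ ≤ ‖x‖ - r := by
  have hx₀ : 0 < ‖x‖ := hr.trans_lt hx
  have hc : 0 ≤ r / ‖x‖ := by positivity
  have hc₁ : 0 ≤ 1 - r / ‖x‖ := sub_nonneg.2 ((div_le_one hx₀).2 hx.le)
  have hz : ‖(r / ‖x‖) • x‖ ≤ r := by
    rw [norm_smul, Real.norm_of_nonneg hc, div_mul_cancel₀ _ hx₀.ne']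
  have hxz : ‖x - (r / ‖x‖) • x‖ = ‖x‖ - r := by
    rw [show x - (r / ‖x‖) • x = (1 - r / ‖x‖) • x by rw [sub_smul, one_smul], norm_smul,
      Real.norm_of_nonneg hc₁, sub_mul, one_mul, div_mul_cancel₀ _ hx₀.ne']
  refine ⟨fun ⟨hu, hmin⟩ => ⟨hu, hxz ▸ hmin _ hz⟩, fun ⟨hu, hxu⟩ => ⟨hu, fun z hz => ?_⟩⟩
  linarith [norm_sub_norm_le x z]

theorem mem_projBall_iff_of_nonneg {r : ℝ} (hr : 0 ≤ r) {x : ell1} (hx₀ : ∀ n, 0 ≤ x n)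
    (hx : r < ‖x‖) {u : ell1} :
    u ∈ projBall r x ↔ (∀ n, 0 ≤ u n ∧ u n ≤ x n) ∧ ‖u‖ = r := by
  rw [mem_projBall_iff_of_lt_norm hr hx, ← lp.norm_sub_le_norm_sub_norm_iff hx₀]
  constructor
  · rintro ⟨hu, hxu⟩
    have hu_eq : ‖u‖ = r := by linarith [norm_sub_norm_le x u]
    exact ⟨hu_eq ▸ hxu, hu_eq⟩
  · rintro ⟨hxu, rfl⟩
    exact ⟨le_rfl, hxu⟩

theorem projBall_single {r b : ℝ} (hr : 0 ≤ r) (hrb : r < b) (m : ℕ) :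
    projBall r (lp.single 1 m b) = {lp.single 1 m r} := by
  have hnorm : ∀ a, 0 ≤ a → ‖(lp.single 1 m a : ell1)‖ = a := fun a ha => by
    rw [lp.norm_single (by norm_num), Real.norm_of_nonneg ha]
  have hb : 0 ≤ b := hr.trans hrb.le
  have hsingle_nonneg : ∀ n, 0 ≤ (lp.single 1 m b : ell1) n := fun n => by
    rcases eq_or_ne n m with rfl | hn <;> simp [*]
  ext u
  rw [Set.mem_singleton_iff, mem_projBall_iff_of_nonneg hr hsingle_nonneg (by rwa [hnorm b hb])]
  constructor
  · rintro ⟨hbox, hu⟩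
    have hu_single : u = lp.single 1 m (u m) := lp.eq_single_of_apply_eq_zero fun n hn =>
      le_antisymm (by simpa [hn] using (hbox n).2) (hbox n).1
    rw [hu_single, hnorm _ (hbox m).1] at hu
    rw [hu_single, hu]
  · rintro rfl
    refine ⟨fun n => ?_, hnorm r hr⟩
    rcases eq_or_ne n m with rfl | hn <;> simp [*, hrb.le]

theorem projBall_infinite {r : ℝ} (hr : 0 < r) {x : ell1} (hx₀ : ∀ n, 0 ≤ x n) (hx : r < ‖x‖)
    {i j : ℕ} (hij : i ≠ j) (hi : 0 < x i) (hj : 0 < x j) : (projBall r x).Infinite := by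
  set c := r / ‖x‖
  have hc₀ : 0 < c := div_pos hr (hr.trans hx)
  have hc₁ : c < 1 := (div_lt_one (hr.trans hx)).2 hx
  set ε := min ((1 - c) * x i) (c * x j)
  have hε : 0 < ε := lt_min (by nlinarith) (by nlinarith)
  let φ : ℝ → ell1 := fun t => c • x + lp.single 1 i t - lp.single 1 j t
  have hφ : ∀ t n, φ t n = c * x n + (Pi.single i t : ℕ → ℝ) n - (Pi.single j t : ℕ → ℝ) n :=
    fun _ _ => by
      simp only [φ, lp.coeFn_sub, lp.coeFn_add, lp.coeFn_smul, lp.coeFn_single, Pi.add_apply,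
        Pi.sub_apply, Pi.smul_apply, smul_eq_mul]
  have hφ_inj : Function.Injective φ := fun s t hst => by
    simpa [hφ, hij] using congrArg (fun y : ell1 => y i) hst
  have hφ_mem : ∀ t ∈ Set.Ioo 0 ε, φ t ∈ projBall r x := by
    rintro t ⟨ht₀, htε⟩
    have hti : t ≤ (1 - c) * x i := htε.le.trans (min_le_left _ _)
    have htj : t ≤ c * x j := htε.le.trans (min_le_right _ _)
    have hsum : HasSum (fun n => φ t n) r := by
      have := (((lp.hasSum_one_of_nonneg hx₀).mul_left c).add (hasSum_pi_single i t)).sub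
        (hasSum_pi_single j t)
      rwa [add_sub_cancel_right, div_mul_cancel₀ _ (hr.trans hx).ne'] at this
    have hbox : ∀ n, 0 ≤ φ t n ∧ φ t n ≤ x n := by
      intro n
      rw [hφ]
      rcases eq_or_ne n i with rfl | hni
      · rw [Pi.single_eq_same, Pi.single_eq_of_ne hij]
        constructor <;> nlinarith
      rcases eq_or_ne n j with rfl | hnj
      · rw [Pi.single_eq_of_ne hni, Pi.single_eq_same]
        constructor <;> nlinarith
      · rw [Pi.single_eq_of_ne hni, Pi.single_eq_of_ne hnj]
        constructor <;> nlinarith [hx₀ n]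
    refine (mem_projBall_iff_of_nonneg hr.le hx₀ hx).2 ⟨hbox, ?_⟩
    rw [← (lp.hasSum_one_of_nonneg fun n => (hbox n).1).unique hsum]
  exact ((Set.Ioo_infinite hε).image hφ_inj.injOn).mono (Set.image_subset_iff.2 hφ_mem)

/-- Proposition 3.3 (c). Let `r > 0` and `x ∈ K₁` with `‖x‖₁ > r`.
Then `P_{rB}(x)` is a singleton iff `x` is an axis point of `ℓ¹`; in that case, if
`x = s(m, ‖x‖₁)` then `P_{rB}(x) = {s(m, r)}`; and if `x` is not an axis point then
`P_{rB}(x)` contains infinitely many elements. -/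
theorem stmt_5 (r : ℝ) (hr : 0 < r) (x : ell1) (hx_nonneg : ∀ n, 0 ≤ x n)
    (hx : r < ‖x‖) :
    ((∃! u : ell1, u ∈ projBall r x) ↔
        ∃ (m : ℕ) (b : ℝ), b ≠ 0 ∧ x = lp.single 1 m b) ∧
    (∀ m : ℕ, x = lp.single 1 m ‖x‖ → projBall r x = {lp.single 1 m r}) ∧
    ((¬ ∃ (m : ℕ) (b : ℝ), b ≠ 0 ∧ x = lp.single 1 m b) →
      (projBall r x).Infinite) := by
  have infinite_of_not_axis :
      (¬ ∃ (m : ℕ) (b : ℝ), b ≠ 0 ∧ x = lp.single 1 m b) → (projBall r x).Infinite := by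
    intro hna
    obtain ⟨i, hi⟩ : ∃ i, x i ≠ 0 := by
      by_contra! h
      exact (hr.trans hx).ne' (by rw [show x = 0 from lp.ext (funext h), norm_zero])
    obtain ⟨j, hji, hj⟩ : ∃ j ≠ i, x j ≠ 0 := by
      by_contra! h
      exact hna ⟨i, x i, hi, lp.eq_single_of_apply_eq_zero h⟩
    exact projBall_infinite hr hx_nonneg hx hji.symm ((hx_nonneg i).lt_of_ne' hi)
      ((hx_nonneg j).lt_of_ne' hj)
  refine ⟨⟨fun hu => ?_, ?_⟩, fun m hm => ?_, infinite_of_not_axis⟩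
  · by_contra hna
    exact infinite_of_not_axis hna (Set.Subsingleton.finite fun _ hv _ hw => hu.unique hv hw)
  · rintro ⟨m, b, -, rfl⟩
    have hb : 0 ≤ b := by simpa using hx_nonneg m
    rw [lp.norm_single (by norm_num), Real.norm_of_nonneg hb] at hx
    rw [projBall_single hr.le hx]
    exact ⟨_, rfl, fun _ => id⟩
  · rw [hm]
    exact projBall_single hr.le hx m
end

section
/- Let r > 0 and let x ∈ K₁⁺ with ‖x‖₁ > r. Then the Mordukhovich (Fréchet) coderivative of the metric projection P_{rB} at the point (x, (r/‖x‖₁)·x) evaluated at the zero functional satisfies D̂*P_{rB}(x, (r/‖x‖₁)·x)(θ*) = {θ*}, where θ* is the zero element of l∞. -/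
open scoped ENNReal

/-!
Near `x` the radial retraction `u ↦ (r / ‖u‖) • u` is a selection of `P_{rB}`, and outside the
ball it is `2`-Lipschitz, so `P_{rB}` is calm at `x`. Testing the coderivative inequality
along this selection gives `⟨ψ, h⟩ ≤ ε ‖h‖` for all small `h` and every `ε > 0`; taking
`h = ±t eₙ` forces `ψₙ = 0`.
-/

section RadialRetraction

variable {E : Type*} [SeminormedAddCommGroup E] [NormedSpace ℝ E]

theorem norm_sub_radial_le {r : ℝ} {u z : E} (hu : r ≤ ‖u‖) (hz : ‖z‖ ≤ r) :
    ‖u - (r / ‖u‖) • u‖ ≤ ‖u - z‖ := by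
  rcases ((norm_nonneg z).trans (hz.trans hu)).eq_or_lt with hu0 | hu0
  · simp [← hu0]
  have hscale : ‖u - (r / ‖u‖) • u‖ = ‖u‖ - r := by
    rw [show u - (r / ‖u‖) • u = (1 - r / ‖u‖) • u by rw [sub_smul, one_smul], norm_smul,
      Real.norm_of_nonneg (sub_nonneg.mpr ((div_le_one hu0).mpr hu))]
    field_simp
  linarith [norm_sub_norm_le u z]

theorem norm_radial_sub_radial_le {r : ℝ} (hr : 0 < r) {u w : E} (hu : r ≤ ‖u‖)
    (hw : r ≤ ‖w‖) : ‖(r / ‖u‖) • u - (r / ‖w‖) • w‖ ≤ 2 * ‖u - w‖ := by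
  have hu0 : 0 < ‖u‖ := hr.trans_le hu
  have hw0 : 0 < ‖w‖ := hr.trans_le hw
  have hsplit : (r / ‖u‖) • u - (r / ‖w‖) • w =
      (r / ‖u‖) • (u - w) + (r / ‖u‖ - r / ‖w‖) • w := by
    rw [smul_sub, sub_smul]; abel
  have hfirst : ‖(r / ‖u‖) • (u - w)‖ ≤ ‖u - w‖ := by
    rw [norm_smul, Real.norm_of_nonneg (by positivity)]
    exact mul_le_of_le_one_left (norm_nonneg _) ((div_le_one hu0).mpr hu)
  have hsecond : ‖(r / ‖u‖ - r / ‖w‖) • w‖ ≤ ‖u - w‖ := by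
    have hcoef : r / ‖u‖ - r / ‖w‖ = r / ‖u‖ * ((‖w‖ - ‖u‖) / ‖w‖) := by
      field_simp
    rw [norm_smul, hcoef, norm_mul, Real.norm_of_nonneg (by positivity), norm_div, norm_norm,
      mul_assoc, div_mul_cancel₀ _ hw0.ne']
    refine (mul_le_of_le_one_left (norm_nonneg _) ((div_le_one hu0).mpr hu)).trans ?_
    simpa [norm_sub_rev u w] using abs_norm_sub_norm_le w u
  calc _ ≤ ‖(r / ‖u‖) • (u - w)‖ + ‖(r / ‖u‖ - r / ‖w‖) • w‖ := hsplit ▸ norm_add_le _ _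
    _ ≤ 2 * ‖u - w‖ := by linarith

end RadialRetraction

theorem radial_mem_projBall {r : ℝ} (hr : 0 < r) {u : ell1} (hu : r ≤ ‖u‖) :
    (r / ‖u‖) • u ∈ projBall r u := by
  refine ⟨?_, fun z hz => norm_sub_radial_le hu hz⟩
  rw [norm_smul, Real.norm_of_nonneg (by positivity), div_mul_cancel₀ _ (hr.trans_le hu).ne']

theorem pairing_zero_left (v : ell1) : pairing 0 v = 0 := by
  simp [pairing]

theorem pairing_single (ψ : ellInfty) (n : ℕ) (t : ℝ) :
    pairing ψ (lp.single 1 n t) = ψ n * t := by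
  rw [pairing, tsum_eq_single n fun m hm => by simp [hm], lp.single_apply_self]

theorem norm_single_ell1 (n : ℕ) (t : ℝ) : ‖(lp.single 1 n t : ell1)‖ = |t| :=
  (lp.norm_single (p := 1) (E := fun _ : ℕ => ℝ) (by norm_num) n t).trans (Real.norm_eq_abs t)

theorem zero_mem_inCoderiv (P : ell1 → Set ell1) (x y : ell1) : inCoderiv P x y 0 0 :=
  fun _ _ => ⟨1, one_pos, fun _ _ _ _ _ => by
    rw [pairing_zero_left, pairing_zero_left, sub_zero]; positivity⟩

theorem pairing_le_of_inCoderiv_zero {P : ell1 → Set ell1} {x y : ell1} {ψ : ellInfty}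
    {s : ell1 → ell1} {ρ L : ℝ} (hρ : 0 < ρ) (hL : 0 ≤ L)
    (hs : ∀ u, ‖u - x‖ < ρ → s u ∈ P u ∧ ‖s u - y‖ ≤ L * ‖u - x‖)
    (hψ : inCoderiv P x y ψ 0) :
    ∀ ε > (0 : ℝ), ∃ δ > (0 : ℝ), ∀ h : ell1, ‖h‖ < δ → pairing ψ h ≤ ε * ‖h‖ := by
  intro ε hε
  obtain ⟨δ, hδ, H⟩ := hψ (ε / (1 + L)) (by positivity)
  refine ⟨min ρ (δ / (1 + L)), by positivity, fun h hh => ?_⟩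
  have hhρ : ‖h‖ < ρ := hh.trans_le (min_le_left _ _)
  have hhδ : (1 + L) * ‖h‖ < δ := by
    have := hh.trans_le (min_le_right _ _)
    rwa [lt_div_iff₀ (by positivity), mul_comm] at this
  obtain ⟨hsP, hsy⟩ := hs (x + h) (by simpa using hhρ)
  rw [add_sub_cancel_left] at hsy
  have key := H (x + h) (s (x + h)) hsP (by rw [add_sub_cancel_left]; nlinarith [norm_nonneg h])
    (by nlinarith [norm_nonneg h])
  rw [add_sub_cancel_left, pairing_zero_left, sub_zero] at key
  calc pairing ψ h ≤ ε / (1 + L) * (‖h‖ + ‖s (x + h) - y‖) := key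
    _ ≤ ε / (1 + L) * ((1 + L) * ‖h‖) := by gcongr; linarith
    _ = ε * ‖h‖ := by field_simp

theorem eq_zero_of_forall_mul_le {c : ℝ}
    (h : ∀ ε > (0 : ℝ), ∃ δ > (0 : ℝ), ∀ t : ℝ, |t| < δ → c * t ≤ ε * |t|) : c = 0 := by
  by_contra hc
  obtain ⟨δ, hδ, H⟩ := h (|c| / 2) (by positivity)
  have hδ2 : |δ / 2| = δ / 2 := abs_of_pos (by positivity)
  have hright := H (δ / 2) (by linarith)
  have hleft := H (-(δ / 2)) (by rw [abs_neg]; linarith)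
  rw [abs_neg, hδ2] at hleft
  rw [hδ2] at hright
  have hboth : |c * (δ / 2)| ≤ |c| / 2 * (δ / 2) := abs_le'.mpr ⟨hright, by linarith⟩
  rw [abs_mul, hδ2] at hboth
  nlinarith [abs_pos.mpr hc]

theorem eq_zero_of_forall_pairing_le {ψ : ellInfty}
    (h : ∀ ε > (0 : ℝ), ∃ δ > (0 : ℝ), ∀ v : ell1, ‖v‖ < δ → pairing ψ v ≤ ε * ‖v‖) :
    ψ = 0 := by
  ext n
  refine eq_zero_of_forall_mul_le fun ε hε => ?_
  obtain ⟨δ, hδ, H⟩ := h ε hε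
  refine ⟨δ, hδ, fun t ht => ?_⟩
  simpa [pairing_single, norm_single_ell1] using H (lp.single 1 n t) (by rwa [norm_single_ell1])

theorem stmt_7_general (r : ℝ) (hr : 0 < r) (x : ell1) (hx : r < ‖x‖) :
    {ψ : ellInfty | inCoderiv (projBall r) x ((r / ‖x‖) • x) ψ 0} = {0} := by
  refine Set.eq_singleton_iff_unique_mem.mpr ⟨zero_mem_inCoderiv _ _ _, fun ψ hψ => ?_⟩
  have hcalm : ∀ u, ‖u - x‖ < ‖x‖ - r →
      (r / ‖u‖) • u ∈ projBall r u ∧ ‖(r / ‖u‖) • u - (r / ‖x‖) • x‖ ≤ 2 * ‖u - x‖ := by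
    intro u hu
    have hru : r ≤ ‖u‖ := by linarith [norm_sub_norm_le x u, norm_sub_rev x u]
    exact ⟨radial_mem_projBall hr hru, norm_radial_sub_radial_le hr hru hx.le⟩
  exact eq_zero_of_forall_pairing_le
    (pairing_le_of_inCoderiv_zero (sub_pos.mpr hx) zero_le_two hcalm hψ)

/-- Theorem 3.4 (ii)(a). Let `r > 0` and `x ∈ K₁⁺` with `‖x‖₁ > r`. Then
the Mordukhovich (Fréchet) coderivative of `P_{rB}` at `(x, (r/‖x‖₁)·x)` evaluated at the
zero functional satisfies `D̂*P_{rB}(x, (r/‖x‖₁)·x)(θ*) = {θ*}`. -/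
theorem stmt_7 (r : ℝ) (hr : 0 < r) (x : ell1) (hx_pos : ∀ n, 0 < x n)
    (hx : r < ‖x‖) :
    {ψ : ellInfty | inCoderiv (projBall r) x ((r / ‖x‖) • x) ψ 0} = {0} :=
  stmt_7_general r hr x hx
end

section
/- Let n be a nonnegative integer. For every f ∈ C[0,1], the best approximation of f from 𝒫ₙ is unique; that is, if p, q ∈ 𝒫ₙ both satisfy ‖f − p‖ ≤ ‖f − r‖ and ‖f − q‖ ≤ ‖f − r‖ for all r ∈ 𝒫ₙ, then p = q. Hence the metric projection P_{𝒫ₙ} : C[0,1] → 𝒫ₙ is a single-valued mapping. -/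
open Polynomial

/-- `𝒫ₙ`: the subspace of `C[0,1]` consisting of (restrictions to `[0,1]` of) real
polynomials of degree at most `n`. -/
def polySet (n : ℕ) : Set C(Set.Icc (0 : ℝ) 1, ℝ) :=
  {p | ∃ q : Polynomial ℝ, q.degree ≤ n ∧ ∀ t : Set.Icc (0 : ℝ) 1, p t = q.eval (t : ℝ)}

/-- Theorem 5.4. For every `f ∈ C[0,1]`, the best approximation of `f`
from `𝒫ₙ` is unique: if `p, q ∈ 𝒫ₙ` are both best approximations of `f`, then `p = q`.
Hence the metric projection `P_{𝒫ₙ} : C[0,1] → 𝒫ₙ` is a single-valued mapping. -/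
theorem stmt_15 (n : ℕ) (f : C(Set.Icc (0 : ℝ) 1, ℝ))
    (p q : C(Set.Icc (0 : ℝ) 1, ℝ)) (hp : p ∈ polySet n) (hq : q ∈ polySet n)
    (hpbest : ∀ r ∈ polySet n, ‖f - p‖ ≤ ‖f - r‖)
    (hqbest : ∀ r ∈ polySet n, ‖f - q‖ ≤ ‖f - r‖) :
    p = q := by
  classical
  obtain ⟨P, hPdeg, hPev⟩ := hp
  obtain ⟨Q, hQdeg, hQev⟩ := hq
  set E := ‖f - p‖ with hE
  have hEq : ‖f - q‖ = E := le_antisymm (hqbest p ⟨P, hPdeg, hPev⟩) (hpbest q ⟨Q, hQdeg, hQev⟩)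
  -- midpoint
  set m : C(Set.Icc (0:ℝ) 1, ℝ) := (2⁻¹ : ℝ) • (p + q) with hm
  set M : ℝ[X] := Polynomial.C (2⁻¹ : ℝ) * (P + Q) with hM
  have hMdeg : M.degree ≤ n := by
    calc M.degree ≤ (Polynomial.C (2⁻¹:ℝ)).degree + (P+Q).degree := degree_mul_le _ _
    _ ≤ 0 + (P+Q).degree := by gcongr; exact degree_C_le
    _ = (P+Q).degree := by rw [zero_add]
    _ ≤ max P.degree Q.degree := degree_add_le _ _
    _ ≤ n := max_le hPdeg hQdeg
  have hMev : ∀ t : Set.Icc (0:ℝ) 1, m t = M.eval (t : ℝ) := by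
    intro t
    simp [hm, hM, hPev t, hQev t]
    ring
  have hmmem : m ∈ polySet n := ⟨M, hMdeg, hMev⟩
  have hEnn : (0:ℝ) ≤ E := hE ▸ norm_nonneg _
  have hfm : ‖f - m‖ = E := by
    refine le_antisymm (((f - m).norm_le hEnn).2 fun t => ?_) (hpbest m hmmem)
    have h1 : |f t - p t| ≤ E := by simpa [hE] using (f - p).norm_coe_le_norm t
    have h2 : |f t - q t| ≤ E := by
      have := (f - q).norm_coe_le_norm t; rw [hEq] at this; simpa using this
    have h3 : (f - m) t = 2⁻¹ * ((f t - p t) + (f t - q t)) := by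
      simp [hm]; ring
    rw [Real.norm_eq_abs, h3]
    rw [abs_le] at h1 h2 ⊢
    constructor <;> [nlinarith; nlinarith]
  set g : C(Set.Icc (0:ℝ) 1, ℝ) := f - m with hg
  -- On the extremal set of g, p = q
  have hkey : ∀ t : Set.Icc (0:ℝ) 1, |g t| = E → p t = q t := by
    intro t ht
    have h1 : |f t - p t| ≤ E := by simpa using (f - p).norm_coe_le_norm t
    have h2 : |f t - q t| ≤ E := by
      have := (f - q).norm_coe_le_norm t; rw [hEq] at this; simpa using this
    have hgt : g t = 2⁻¹ * ((f t - p t) + (f t - q t)) := by simp [hg, hm]; ring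
    rcases abs_eq (by positivity : (0:ℝ) ≤ E) |>.mp ht with h | h <;>
      [skip; skip] <;>
    · rw [hgt] at h
      rw [abs_le] at h1 h2
      linarith
  by_contra hpq
  -- E > 0, else p = f = q
  have hE0 : 0 < E := by
    rcases (norm_nonneg (f - p)).lt_or_eq with h | h
    · exact h
    · exfalso
      apply hpq
      have hE0' : E = 0 := hE.trans h.symm
      have h1 : f - p = 0 := norm_eq_zero.mp (hE.symm.trans hE0')
      have h2 : f - q = 0 := norm_eq_zero.mp (hEq.trans hE0')
      have := sub_eq_zero.mp h1
      have := sub_eq_zero.mp h2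
      rw [← sub_eq_zero.mp h1, ← sub_eq_zero.mp h2]
  -- difference polynomial
  set D : ℝ[X] := P - Q with hD
  have hDne : D ≠ 0 := by
    intro h0
    apply hpq
    ext t
    have := sub_eq_zero.mp (hD ▸ h0 : P - Q = 0)
    rw [hPev t, hQev t, this]
  have hDdeg : D.degree ≤ n := le_trans (degree_sub_le _ _) (max_le hPdeg hQdeg)
  -- roots finset
  set s : Finset ℝ := D.roots.toFinset with hs
  have hscard : s.card ≤ n := by
    calc s.card ≤ Multiset.card D.roots := D.roots.toFinset_card_le
      _ ≤ D.natDegree := D.card_roots' 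
      _ ≤ n := natDegree_le_iff_degree_le.mpr hDdeg
  -- extremal points are roots of D
  have hroot : ∀ t : Set.Icc (0:ℝ) 1, |g t| = E → (t : ℝ) ∈ s := by
    intro t ht
    have hpq' := hkey t ht
    rw [hPev t, hQev t] at hpq'
    simp only [hs, Multiset.mem_toFinset, mem_roots, hDne, ne_eq, not_false_eq_true, true_and]
    simp [hD, IsRoot, sub_eq_zero, hpq']
  -- values for interpolation
  set v : ℝ → ℝ := fun x => if h : x ∈ Set.Icc (0:ℝ) 1 then g ⟨x, h⟩ else 0 with hv
  set R : ℝ[X] := Lagrange.interpolate s id v with hR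
  have hRdeg : R.degree ≤ n := by
    have h := Lagrange.degree_interpolate_lt (s := s) (r := v) (Set.injOn_id _)
    refine le_of_lt (lt_of_lt_of_le h ?_)
    exact_mod_cast hscard
  have hRev : ∀ t : Set.Icc (0:ℝ) 1, |g t| = E → R.eval (t : ℝ) = g t := by
    intro t ht
    have hmem := hroot t ht
    have := Lagrange.eval_interpolate_at_node (v := id) (r := v) (Set.injOn_id _) hmem
    rw [hR]
    simp only [id] at this
    rw [this, hv]
    simp [t.2]
  -- the perturbed map
  set Rc : C(Set.Icc (0:ℝ) 1, ℝ) := R.toContinuousMapOn _ with hRc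
  -- bound away from extremal set
  set K : Set (Set.Icc (0:ℝ) 1) := {t | g t * Rc t ≤ 0} with hK
  have hKclosed : IsClosed K := isClosed_le (by fun_prop) continuous_const
  have hKcompact : IsCompact K := hKclosed.isCompact
  have hKlt : ∀ t ∈ K, |g t| < E := by
    intro t htK
    rcases lt_or_eq_of_le (by simpa [hfm] using g.norm_coe_le_norm t : |g t| ≤ E) with h | h
    · exact h
    · exfalso
      have hRv := hRev t h
      have hRct : Rc t = g t := hRv
      rw [hK, Set.mem_setOf_eq, hRct] at htK
      have : g t ≠ 0 := by intro h0; rw [h0] at h; simp at h; exact absurd h.symm (ne_of_gt hE0)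
      nlinarith [mul_self_pos.mpr this]
  obtain ⟨E', hE'lt, hE'bd⟩ : ∃ E', E' < E ∧ ∀ t ∈ K, |g t| ≤ E' := by
    rcases K.eq_empty_or_nonempty with h | h
    · exact ⟨E/2, by linarith, by simp [h]⟩
    · obtain ⟨t₀, ht₀K, ht₀⟩ := hKcompact.exists_isMaxOn h
        ((by fun_prop : Continuous fun t => |g t|)).continuousOn
      exact ⟨|g t₀|, hKlt t₀ ht₀K, fun t ht => ht₀ ht⟩
  -- choose ε
  set ε : ℝ := (min (E - E') E) / (2 * (‖Rc‖ + 1)) with hε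
  have hRcnorm : (0:ℝ) < ‖Rc‖ + 1 := by positivity
  have hεpos : 0 < ε := by
    apply div_pos _ (by positivity)
    exact lt_min (by linarith) hE0
  have hεR : ε * ‖Rc‖ < min (E - E') E := by
    calc ε * ‖Rc‖ ≤ ε * (‖Rc‖ + 1) := by nlinarith [norm_nonneg Rc]
      _ = min (E - E') E / 2 := by rw [hε]; field_simp
      _ < min (E - E') E := by
          have : 0 < min (E - E') E := lt_min (by linarith) hE0
          linarith
  -- the better approximation
  set m' : C(Set.Icc (0:ℝ) 1, ℝ) := m + ε • Rc with hm'
  have hm'mem : m' ∈ polySet n := by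
    refine ⟨M + Polynomial.C ε * R, ?_, ?_⟩
    · refine le_trans (degree_add_le _ _) (max_le hMdeg ?_)
      calc (Polynomial.C ε * R).degree ≤ (Polynomial.C ε).degree + R.degree :=
            degree_mul_le _ _
        _ ≤ 0 + R.degree := by gcongr; exact degree_C_le
        _ = R.degree := by rw [zero_add]
        _ ≤ n := hRdeg
    · intro t
      have : Rc t = R.eval (t : ℝ) := rfl
      simp [hm', hMev t, this]
  -- show ‖f - m'‖ < E, contradiction
  have hfm' : f - m' = g - ε • Rc := by rw [hm', hg]; abel
  have hcontra : ‖f - m'‖ < E := by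
    obtain ⟨t, _, ht⟩ := isCompact_univ.exists_isMaxOn (Set.univ_nonempty)
      ((by fun_prop : Continuous fun t => |(f - m') t|)).continuousOn
    have hnorm : ‖f - m'‖ = |(f - m') t| := by
      refine le_antisymm ?_ (by simpa using (f - m').norm_coe_le_norm t)
      exact ((f - m').norm_le (abs_nonneg _)).2 fun x => by simpa using ht (Set.mem_univ x)
    rw [hnorm, hfm']
    simp only [ContinuousMap.sub_apply, ContinuousMap.smul_apply, smul_eq_mul]
    have hRct : |Rc t| ≤ ‖Rc‖ := by simpa using Rc.norm_coe_le_norm t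
    by_cases htK : t ∈ K
    · -- |g t| ≤ E', ε|Rc t| small
      calc |g t - ε * Rc t| ≤ |g t| + ε * |Rc t| := by
            have h1 : |g t - ε * Rc t| ≤ |g t| + |ε * Rc t| := by
              rw [sub_eq_add_neg]
              exact (abs_add_le _ _).trans (by rw [abs_neg])
            rwa [abs_mul, abs_of_pos hεpos] at h1
        _ ≤ E' + ε * ‖Rc‖ :=
            add_le_add (hE'bd t htK) (mul_le_mul_of_nonneg_left hRct hεpos.le)
        _ < E' + (E - E') := by
            have := lt_of_lt_of_le hεR (min_le_left _ _); linarith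
        _ = E := by ring
    · -- g t * Rc t > 0 : same sign
      have hpos : 0 < g t * Rc t := lt_of_not_ge fun h => htK h
      have hgle : |g t| ≤ E := by simpa [hfm] using g.norm_coe_le_norm t
      have hεRc : ε * |Rc t| < E := by
        calc ε * |Rc t| ≤ ε * ‖Rc‖ := mul_le_mul_of_nonneg_left hRct hεpos.le
          _ < E := lt_of_lt_of_le hεR (min_le_right _ _)
      have hb : |ε * Rc t| < E := by rwa [abs_mul, abs_of_pos hεpos]
      rw [abs_lt] at hb
      rw [abs_le] at hgle
      rw [abs_lt]
      rcases mul_pos_iff.mp hpos with ⟨h1, h2⟩ | ⟨h1, h2⟩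
      · have := mul_pos hεpos h2
        constructor <;> linarith
      · have := mul_neg_of_pos_of_neg hεpos h2
        constructor <;> linarith
  have := hpbest m' hm'mem
  linarith
end

section
/- Let n be a positive integer, let f ∈ C[0,1] and let p = P_{𝒫ₙ}(f). Let μ and γ be continuous linear functionals on C[0,1] such that ⟨μ, 1⟩ ≠ ⟨γ, 1⟩, where 1 denotes the constant function with value 1 on [0,1]. Then γ ∉ D̂*P_{𝒫ₙ}(f, p)(μ) and μ ∉ D̂*P_{𝒫ₙ}(f, p)(γ). -/
/-- `γ` belongs to the Mordukhovich (Fréchet) coderivative `D̂*P(f, P f)(μ)` of the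
single-valued mapping `P` on `C[0,1]` at `f`, evaluated at `μ`: the ε-δ form of
`limsup_{g→f} (⟨γ, g − f⟩ − ⟨μ, P(g) − P(f)⟩)/(‖g − f‖ + ‖P(g) − P(f)‖) ≤ 0`. -/
def inCoderivP (P : C(Set.Icc (0 : ℝ) 1, ℝ) → C(Set.Icc (0 : ℝ) 1, ℝ))
    (f : C(Set.Icc (0 : ℝ) 1, ℝ)) (γ μ : C(Set.Icc (0 : ℝ) 1, ℝ) →L[ℝ] ℝ) : Prop :=
  ∀ ε > (0 : ℝ), ∃ δ > (0 : ℝ), ∀ g : C(Set.Icc (0 : ℝ) 1, ℝ), ‖g - f‖ < δ →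
    γ (g - f) - μ (P g - P f) ≤ ε * (‖g - f‖ + ‖P g - P f‖)

lemma polySet_add {n : ℕ} {p q : C(Set.Icc (0:ℝ) 1, ℝ)}
    (hp : p ∈ polySet n) (hq : q ∈ polySet n) : p + q ∈ polySet n := by
  obtain ⟨a, ha, hae⟩ := hp
  obtain ⟨b, hb, hbe⟩ := hq
  exact ⟨a + b, le_trans (Polynomial.degree_add_le _ _) (max_le ha hb),
    fun t => by simp [hae t, hbe t]⟩

lemma polySet_smul {n : ℕ} (c : ℝ) {p : C(Set.Icc (0:ℝ) 1, ℝ)}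
    (hp : p ∈ polySet n) : c • p ∈ polySet n := by
  obtain ⟨a, ha, hae⟩ := hp
  exact ⟨c • a, le_trans (Polynomial.degree_smul_le _ _) ha,
    fun t => by simp [hae t, Polynomial.eval_smul]⟩

lemma polySet_smul_one {n : ℕ} (c : ℝ) : c • (1 : C(Set.Icc (0:ℝ) 1, ℝ)) ∈ polySet n := by
  refine ⟨Polynomial.C c, ?_, fun t => by simp⟩
  exact le_trans (Polynomial.degree_C_le) (by exact_mod_cast Nat.cast_nonneg n)

lemma polySet_add_smul_one {n : ℕ} {p : C(Set.Icc (0:ℝ) 1, ℝ)} (hp : p ∈ polySet n) (c : ℝ) :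
    p + c • (1 : C(Set.Icc (0:ℝ) 1, ℝ)) ∈ polySet n :=
  polySet_add hp (polySet_smul_one c)

/-- If `|x| ≤ d`, `|y| ≤ d` and `|x + y| = 2 * d` then `x = y`. -/
lemma eq_of_abs_avg (d x y : ℝ) (hx : |x| ≤ d) (hy : |y| ≤ d) (hxy : |x + y| = 2 * d) :
    x = y := by
  rw [abs_le] at hx hy
  rcases abs_eq (by linarith : (0:ℝ) ≤ 2 * d) |>.mp hxy with h | h <;> linarith

lemma abs_lt_of_sq_lt_sq'' {x d : ℝ} (h : x ^ 2 < d ^ 2) (hd : 0 < d) : |x| < d := by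
  rcases abs_cases x with ⟨h1, _⟩ | ⟨h1, _⟩ <;> nlinarith

/-- **Key perturbation estimate.**  If `|e| ≤ d` everywhere and `w` agrees with `e` at every
extreme point (where `|e t| = d`), then `‖e - λ w‖ < d` for small positive `λ`. -/
lemma key_pert (e w : C(Set.Icc (0:ℝ) 1, ℝ)) (d : ℝ) (hd : 0 < d)
    (hb : ∀ t, |e t| ≤ d) (hnode : ∀ t, |e t| = d → w t = e t) :
    ∃ lam : ℝ, 0 < lam ∧ ‖e - lam • w‖ < d := by
  obtain ⟨M, hM1, hM0, hMw⟩ : ∃ M : ℝ, ‖w‖ ≤ M ∧ 0 < M ∧ ∀ t, |w t| ≤ M := by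
    refine ⟨‖w‖ + 1, by linarith, by positivity, fun t => ?_⟩
    have := w.norm_coe_le_norm t
    rw [Real.norm_eq_abs] at this; linarith
  set c : ℝ := d ^ 2 / 2 with hc_def
  have hc0 : 0 < c := by positivity
  set K : Set (Set.Icc (0:ℝ) 1) := {t | e t * w t ≤ c} with hK_def
  have hKlt : ∀ t ∈ K, |e t| < d := by
    intro t htK
    rcases lt_or_eq_of_le (hb t) with h | h
    · exact h
    · exfalso
      have h1 : w t = e t := hnode t h
      have h2 : d ^ 2 = e t ^ 2 := by rw [← h, sq_abs]
      have h3 : e t * w t ≤ c := htK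
      rw [h1] at h3
      nlinarith
  have hKcompact : IsCompact K := by
    have hKclosed : IsClosed K :=
      IsClosed.preimage (e.continuous.mul w.continuous) isClosed_Iic
    exact hKclosed.isCompact
  obtain ⟨d'', hd''lt, hd''0, hKbound⟩ :
      ∃ d'' : ℝ, d'' < d ∧ 0 ≤ d'' ∧ ∀ t ∈ K, |e t| ≤ d'' := by
    rcases K.eq_empty_or_nonempty with hKe | hKne
    · exact ⟨0, hd, le_refl 0, by rw [hKe]; simp⟩
    · obtain ⟨t₀, ht₀K, ht₀max⟩ := hKcompact.exists_isMaxOn hKne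
        ((continuous_abs.comp e.continuous).continuousOn)
      exact ⟨|e t₀|, hKlt t₀ ht₀K, abs_nonneg _, fun t ht => ht₀max ht⟩
  set lam : ℝ := min (c / M ^ 2) ((d - d'') / (2 * M)) with hlam_def
  have hlam0 : 0 < lam :=
    lt_min (by positivity) (div_pos (by linarith) (by positivity))
  have hlamM2 : lam * M ^ 2 ≤ c := by
    have h1 : lam ≤ c / M ^ 2 := min_le_left _ _
    calc lam * M ^ 2 ≤ (c / M ^ 2) * M ^ 2 := by nlinarith [sq_nonneg M]
      _ = c := by field_simp
  have hlamM : lam * M < d - d'' := by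
    have h1 : lam ≤ (d - d'') / (2 * M) := min_le_right _ _
    have h2 : (d - d'') / (2 * M) * M < d - d'' := by
      rw [div_mul_eq_mul_div, mul_comm]
      rw [div_lt_iff₀ (by positivity)]
      nlinarith
    nlinarith
  refine ⟨lam, hlam0, ?_⟩
  rw [ContinuousMap.norm_lt_iff _ hd]
  intro t
  have happ : (e - lam • w) t = e t - lam * w t := by simp
  rw [happ, Real.norm_eq_abs]
  by_cases htK : t ∈ K
  · calc |e t - lam * w t| ≤ |e t| + lam * |w t| := by
          refine le_trans (abs_sub _ _) ?_
          rw [abs_mul, abs_of_pos hlam0]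
      _ ≤ d'' + lam * M := by
          have h1 := hKbound t htK
          have h2 := hMw t
          nlinarith
      _ < d := by linarith
  · have htU : c < e t * w t := by
      have : ¬ (e t * w t ≤ c) := htK
      linarith [not_le.mp this]
    apply abs_lt_of_sq_lt_sq'' _ hd
    have hq2 : w t ^ 2 ≤ M ^ 2 := by
      have h1 := hMw t
      nlinarith [neg_abs_le (w t), le_abs_self (w t)]
    have hee : e t ^ 2 ≤ d ^ 2 := by
      have h1 := hb t
      nlinarith [neg_abs_le (e t), le_abs_self (e t)]
    have h3 : lam ^ 2 * w t ^ 2 ≤ lam * c := by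
      have h4 : lam * (lam * M ^ 2) ≤ lam * c := by nlinarith
      nlinarith
    nlinarith

/-- **Uniqueness of best approximation** from `polySet n` (Chebyshev). -/
lemma best_approx_unique {n : ℕ} {f p₁ p₂ : C(Set.Icc (0:ℝ) 1, ℝ)}
    (h₁m : p₁ ∈ polySet n) (h₁ : ∀ q ∈ polySet n, ‖f - p₁‖ ≤ ‖f - q‖)
    (h₂m : p₂ ∈ polySet n) (h₂ : ∀ q ∈ polySet n, ‖f - p₂‖ ≤ ‖f - q‖) :
    p₁ = p₂ := by
  classical
  obtain ⟨q₁, hq₁d, hq₁e⟩ := id h₁m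
  obtain ⟨q₂, hq₂d, hq₂e⟩ := id h₂m
  have hd₂ : ‖f - p₂‖ = ‖f - p₁‖ := le_antisymm (h₂ p₁ h₁m) (h₁ p₂ h₂m)
  rcases eq_or_lt_of_le (norm_nonneg (f - p₁)) with hd0 | hdpos
  · -- distance zero : f = p₁ = p₂
    have e1 : f - p₁ = 0 := by rwa [eq_comm, norm_eq_zero] at hd0
    have e2 : f - p₂ = 0 := by rw [← norm_eq_zero, hd₂, ← hd0]
    rw [← sub_eq_zero.mp e1, ← sub_eq_zero.mp e2]
  -- positive distance
  have hmmem : (2⁻¹ : ℝ) • (p₁ + p₂) ∈ polySet n :=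
    polySet_smul _ (polySet_add h₁m h₂m)
  set m : C(Set.Icc (0:ℝ) 1, ℝ) := (2⁻¹ : ℝ) • (p₁ + p₂) with hm_def
  have hm1 : f - m = (2⁻¹ : ℝ) • ((f - p₁) + (f - p₂)) := by
    rw [hm_def]; module
  have hmd : ‖f - m‖ = ‖f - p₁‖ := by
    refine le_antisymm ?_ (h₁ m hmmem)
    have hns := norm_smul (2⁻¹ : ℝ) ((f - p₁) + (f - p₂))
    rw [hm1, hns, Real.norm_eq_abs, abs_of_pos (by norm_num : (0:ℝ) < 2⁻¹)]
    have hle := norm_add_le (f - p₁) (f - p₂)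
    rw [hd₂] at hle
    linarith
  obtain ⟨d, hd_def⟩ : ∃ d : ℝ, d = ‖f - p₁‖ := ⟨_, rfl⟩
  rw [← hd_def] at hdpos hmd hd₂
  set e : C(Set.Icc (0:ℝ) 1, ℝ) := f - m with he_def
  have hebound : ∀ t, |e t| ≤ d := by
    intro t
    have := e.norm_coe_le_norm t
    rwa [Real.norm_eq_abs, hmd] at this
  have he1b : ∀ t, |(f - p₁) t| ≤ d := by
    intro t
    have := (f - p₁).norm_coe_le_norm t
    rwa [Real.norm_eq_abs, ← hd_def] at this
  have he2b : ∀ t, |(f - p₂) t| ≤ d := by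
    intro t
    have := (f - p₂).norm_coe_le_norm t
    rwa [Real.norm_eq_abs, hd₂] at this
  -- on the extreme set the two best approximations agree
  have hE_eq : ∀ t : Set.Icc (0:ℝ) 1, |e t| = d → p₁ t = p₂ t := by
    intro t ht
    have havg : e t = 2⁻¹ * ((f t - p₁ t) + (f t - p₂ t)) := by
      have := congrArg (fun g : C(Set.Icc (0:ℝ) 1, ℝ) => g t) hm1
      simp only [ContinuousMap.smul_apply, ContinuousMap.add_apply,
        ContinuousMap.sub_apply, smul_eq_mul] at this
      rw [he_def]; simp only [ContinuousMap.sub_apply]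
      exact this
    have habs : |(f - p₁) t + (f - p₂) t| = 2 * d := by
      have h1 : |e t| = d := ht
      rw [havg] at h1
      have hx : (f - p₁) t + (f - p₂) t = (f t - p₁ t) + (f t - p₂ t) := by simp
      rw [hx]
      rw [abs_mul, abs_of_pos (by norm_num : (0:ℝ) < 2⁻¹)] at h1
      linarith [abs_nonneg ((f t - p₁ t) + (f t - p₂ t))]
    have hxy := eq_of_abs_avg d _ _ (he1b t) (he2b t) habs
    have hx1 : (f - p₁) t = f t - p₁ t := by simp
    have hx2 : (f - p₂) t = f t - p₂ t := by simp
    rw [hx1, hx2] at hxy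
    linarith
  -- there are at least n+1 extreme points
  have hbig : ∃ s : Finset (Set.Icc (0:ℝ) 1),
      (∀ t ∈ s, |e t| = d) ∧ n + 1 ≤ s.card := by
    set E : Set (Set.Icc (0:ℝ) 1) := {t | |e t| = d} with hE_def
    by_cases hinf : E.Infinite
    · obtain ⟨s, hs, hcard⟩ := hinf.exists_subset_card_eq (n + 1)
      exact ⟨s, fun t ht => hs ht, hcard.ge⟩
    have hfin : E.Finite := Set.not_infinite.mp hinf
    by_contra hsmall
    push_neg at hsmall
    have hs₀card : hfin.toFinset.card ≤ n := by
      have := hsmall hfin.toFinset (fun t ht => hfin.mem_toFinset.mp ht)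
      omega
    -- interpolate e on the extreme set
    obtain ⟨w, hwmem, hwnode⟩ : ∃ w : C(Set.Icc (0:ℝ) 1, ℝ), w ∈ polySet n ∧
        ∀ t, |e t| = d → w t = e t := by
      set sR : Finset ℝ := hfin.toFinset.image Subtype.val with hsR_def
      have hsRcard : sR.card ≤ n := le_trans (Finset.card_image_le) hs₀card
      set val : ℝ → ℝ := fun x => if hx : x ∈ Set.Icc (0:ℝ) 1 then e ⟨x, hx⟩ else 0
        with hval_def
      set q : Polynomial ℝ := Lagrange.interpolate sR id val with hq_def
      have hinj : Set.InjOn id (↑sR : Set ℝ) := Function.injective_id.injOn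
      have hqdeg : q.degree ≤ n := by
        refine le_trans (Lagrange.degree_interpolate_le _ hinj) ?_
        exact_mod_cast (le_trans (Nat.sub_le _ _) hsRcard)
      refine ⟨q.toContinuousMapOn (Set.Icc (0:ℝ) 1), ⟨q, hqdeg, fun t => rfl⟩, ?_⟩
      intro t ht
      have hts : (t : ℝ) ∈ sR :=
        Finset.mem_image_of_mem _ (hfin.mem_toFinset.mpr ht)
      have heval := Lagrange.eval_interpolate_at_node val hinj hts
      simp only [id] at heval
      show q.eval (t : ℝ) = e t
      rw [hq_def, heval, hval_def]
      simp only [dif_pos t.2]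
    obtain ⟨lam, hlam0, hlt⟩ := key_pert e w d hdpos hebound hwnode
    have hmem2 : m + lam • w ∈ polySet n := polySet_add hmmem (polySet_smul _ hwmem)
    have hlow := h₁ _ hmem2
    have hfsub : f - (m + lam • w) = e - lam • w := by
      rw [he_def]; module
    rw [hfsub, ← hd_def] at hlow
    linarith
  -- conclude : the two representing polynomials agree
  obtain ⟨s, hsE, hscard⟩ := hbig
  have hq12 : q₁ - q₂ = 0 := by
    apply Polynomial.eq_zero_of_natDegree_lt_card_of_eval_eq_zero' _ (s.image Subtype.val)
    · intro x hx
      obtain ⟨t, hts, rfl⟩ := Finset.mem_image.mp hx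
      have := hE_eq t (hsE t hts)
      rw [Polynomial.eval_sub, ← hq₁e t, ← hq₂e t, this, sub_self]
    · have hcard : (s.image Subtype.val).card = s.card :=
        Finset.card_image_of_injective _ Subtype.val_injective
      have hnd : (q₁ - q₂).natDegree ≤ n :=
        Polynomial.natDegree_le_iff_degree_le.mpr
          (le_trans (Polynomial.degree_sub_le _ _) (max_le hq₁d hq₂d))
      omega
  ext t
  have hq : q₁.eval (t : ℝ) = q₂.eval (t : ℝ) := by
    rw [sub_eq_zero.mp hq12]
  rw [hq₁e t, hq₂e t, hq]

/-- Theorem 5.10 (i). Let `n` be a positive integer, `f ∈ C[0,1]`,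
`p = P_{𝒫ₙ}(f)` its (unique) best approximation from `𝒫ₙ`, and let `μ, γ` be continuous
linear functionals on `C[0,1]` with `⟨μ, 1⟩ ≠ ⟨γ, 1⟩` (`1` the constant function one).
Then `γ ∉ D̂*P_{𝒫ₙ}(f, p)(μ)` and `μ ∉ D̂*P_{𝒫ₙ}(f, p)(γ)`. -/
theorem stmt_17 (n : ℕ) (hn : 0 < n)
    (P : C(Set.Icc (0 : ℝ) 1, ℝ) → C(Set.Icc (0 : ℝ) 1, ℝ))
    (hP : ∀ g, P g ∈ polySet n ∧ ∀ q ∈ polySet n, ‖g - P g‖ ≤ ‖g - q‖)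
    (f : C(Set.Icc (0 : ℝ) 1, ℝ))
    (μ γ : C(Set.Icc (0 : ℝ) 1, ℝ) →L[ℝ] ℝ) (h : μ 1 ≠ γ 1) :
    ¬ inCoderivP P f γ μ ∧ ¬ inCoderivP P f μ γ := by
  -- key fact : P (f + t • 1) = P f + t • 1
  have key : ∀ t : ℝ, P (f + t • 1) = P f + t • (1 : C(Set.Icc (0:ℝ) 1, ℝ)) := by
    intro t
    have h1 := hP (f + t • 1)
    have h2 := hP f
    refine best_approx_unique h1.1 h1.2 (polySet_add_smul_one h2.1 t) ?_
    intro q hq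
    have hq' : q - t • (1 : C(Set.Icc (0:ℝ) 1, ℝ)) ∈ polySet n := by
      simpa [sub_eq_add_neg, neg_smul] using polySet_add_smul_one hq (-t)
    have := h2.2 _ hq'
    have e1 : f + t • 1 - (P f + t • (1:C(Set.Icc (0:ℝ) 1, ℝ))) = f - P f := by module
    have e2 : f + t • 1 - q = f - (q - t • (1:C(Set.Icc (0:ℝ) 1, ℝ))) := by module
    rw [e1, e2]; exact this
  have hnorm : ∀ t : ℝ, ‖t • (1 : C(Set.Icc (0:ℝ) 1, ℝ))‖ = |t| := by
    intro t
    have h2 := norm_smul t (1 : C(Set.Icc (0:ℝ) 1, ℝ))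
    rw [h2, norm_one, mul_one, Real.norm_eq_abs]
  -- generic disproof
  have main : ∀ (γ' μ' : C(Set.Icc (0 : ℝ) 1, ℝ) →L[ℝ] ℝ), μ' 1 ≠ γ' 1 →
      ¬ inCoderivP P f γ' μ' := by
    intro γ' μ' hne hc
    set a : ℝ := γ' 1 - μ' 1 with ha
    have ha0 : a ≠ 0 := sub_ne_zero.mpr (Ne.symm hne)
    obtain ⟨δ, hδ, hδ2⟩ := hc (|a|/4) (by positivity)
    set t : ℝ := (if 0 ≤ a then (1:ℝ) else -1) * (min δ 1 / 2) with ht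
    have htabs : |t| = min δ 1 / 2 := by
      rw [ht, abs_mul]
      have : |min δ 1 / 2| = min δ 1 / 2 := abs_of_pos (by positivity)
      split_ifs <;> simp [this]
    have hta : t * a = |a| * (min δ 1 / 2) := by
      rw [ht]
      rcases le_or_gt 0 a with hpos | hneg
      · rw [if_pos hpos, abs_of_nonneg hpos]; ring
      · rw [if_neg (not_le.mpr hneg), abs_of_neg hneg]; ring
    have hsmall : ‖(f + t • 1) - f‖ < δ := by
      have : (f + t • (1:C(Set.Icc (0:ℝ) 1, ℝ))) - f = t • 1 := by module
      rw [this, hnorm, htabs]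
      have := min_le_left δ 1; linarith
    have := hδ2 (f + t • 1) hsmall
    rw [key t] at this
    have e1 : (f + t • (1:C(Set.Icc (0:ℝ) 1, ℝ))) - f = t • 1 := by module
    have e2 : (P f + t • (1:C(Set.Icc (0:ℝ) 1, ℝ))) - P f = t • 1 := by module
    rw [e1, e2, hnorm, map_smul, map_smul] at this
    simp only [smul_eq_mul] at this
    have hval : t * γ' 1 - t * μ' 1 = t * a := by rw [ha]; ring
    rw [hval, hta] at this
    have hmin : 0 < min δ 1 / 2 := by positivity
    have habs : 0 < |a| := abs_pos.mpr ha0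
    nlinarith
  exact ⟨main γ μ h, main μ γ (Ne.symm h)⟩
end

section
/- Let n be a positive integer, let f ∈ C[0,1] and let p = P_{𝒫ₙ}(f). Let γ be a continuous linear functional on C[0,1] with ⟨γ, f − p⟩ < 0. Then for every continuous linear functional μ on C[0,1], γ ∉ D̂*P_{𝒫ₙ}(f, p)(μ). -/
open Filter Topology

def IsBestApprox {E : Type*} [NormedAddCommGroup E] (K : Set E) (f p : E) : Prop :=
  p ∈ K ∧ ∀ q ∈ K, ‖f - p‖ ≤ ‖f - q‖

namespace IsBestApprox

variable {E : Type*} [NormedAddCommGroup E] [NormedSpace ℝ E] {f p p₁ p₂ : E}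

theorem add_smul_sub {K : Submodule ℝ E} (hp : IsBestApprox K f p) (c : ℝ) :
    IsBestApprox K (p + c • (f - p)) p := by
  refine ⟨hp.1, fun q hq => ?_⟩
  rcases eq_or_ne c 0 with rfl | hc
  · simp
  have hq' : p + c⁻¹ • (q - p) ∈ K := K.add_mem hp.1 (K.smul_mem _ (K.sub_mem hq hp.1))
  have hrepr : p + c • (f - p) - q = c • (f - (p + c⁻¹ • (q - p))) := by
    rw [smul_sub c f (p + _), smul_add, smul_inv_smul₀ hc]; module
  rw [add_sub_cancel_left, hrepr, norm_smul, norm_smul]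
  exact mul_le_mul_of_nonneg_left (hp.2 _ hq') (norm_nonneg c)

theorem smul_add_smul {K : Set E} (hK : Convex ℝ K) (h₁ : IsBestApprox K f p₁) (h₂ : IsBestApprox K f p₂)
    {a b : ℝ} (ha : 0 ≤ a) (hb : 0 ≤ b) (hab : a + b = 1) :
    IsBestApprox K f (a • p₁ + b • p₂) := by
  refine ⟨hK h₁.1 h₂.1 ha hb hab, fun q hq => ?_⟩
  calc ‖f - (a • p₁ + b • p₂)‖ = ‖a • (f - p₁) + b • (f - p₂)‖ := by
        have hf : f = a • f + b • f := by rw [← add_smul, hab, one_smul]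
        conv_lhs => rw [hf]
        congr 1; module
    _ ≤ a * ‖f - p₁‖ + b * ‖f - p₂‖ := by
        refine (norm_add_le _ _).trans ?_
        rw [norm_smul, norm_smul, Real.norm_of_nonneg ha, Real.norm_of_nonneg hb]
    _ ≤ a * ‖f - q‖ + b * ‖f - q‖ := by gcongr <;> [exact h₁.2 q hq; exact h₂.2 q hq]
    _ = ‖f - q‖ := by rw [← add_mul, hab, one_mul]

end IsBestApprox

section Extremal

variable {X : Type*} [TopologicalSpace X] [CompactSpace X]

def extremalSet (e : C(X, ℝ)) : Set X := {x | |e x| = ‖e‖}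

theorem exists_pos_le_mul_or_le_norm_sub_abs [Nonempty X] (e v : C(X, ℝ))
    (hv : ∀ x ∈ extremalSet e, 0 < e x * v x) :
    ∃ m > 0, ∀ x, m ≤ e x * v x ∨ m ≤ ‖e‖ - |e x| := by
  let φ : C(X, ℝ) := ⟨fun x => max (e x * v x) (‖e‖ - |e x|), by fun_prop⟩
  obtain ⟨x₀, -, hx₀⟩ := isCompact_univ.exists_isMinOn Set.univ_nonempty φ.continuous.continuousOn
  refine ⟨φ x₀, ?_, fun x => le_max_iff.mp (hx₀ (Set.mem_univ x))⟩
  rcases (e.norm_coe_le_norm x₀).eq_or_lt with h | h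
  · exact lt_max_of_lt_left (hv x₀ h)
  · exact lt_max_of_lt_right (by rw [Real.norm_eq_abs] at h; linarith)

theorem exists_norm_sub_smul_lt [Nonempty X] (e v : C(X, ℝ))
    (hv : ∀ x ∈ extremalSet e, 0 < e x * v x) : ∃ t > (0 : ℝ), ‖e - t • v‖ < ‖e‖ := by
  obtain ⟨m, hm, hmx⟩ := exists_pos_le_mul_or_le_norm_sub_abs e v hv
  set M := ‖v‖
  -- this choice gives both `t * M < m` and `t * M ^ 2 < m`
  set t := m / (M + 1) ^ 2
  have ht : 0 < t := by positivity
  have htM : t * (M + 1) ^ 2 = m := div_mul_cancel₀ m (by positivity)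
  have hM : 0 ≤ M := norm_nonneg v
  refine ⟨t, ht, (e - t • v).norm_lt_iff_of_nonempty.2 fun x => ?_⟩
  have hvx : |v x| ≤ M := v.norm_coe_le_norm x
  have hex : |e x| ≤ ‖e‖ := e.norm_coe_le_norm x
  rw [Real.norm_eq_abs, ContinuousMap.sub_apply, ContinuousMap.smul_apply, smul_eq_mul]
  rcases hmx x with hmul | habs
  · -- `(e x - t v x)² ≤ ‖e‖² - 2 t m + t² M² < ‖e‖²`
    have hv2 : v x ^ 2 ≤ M ^ 2 := by rw [← sq_abs]; gcongr
    have he2 : e x ^ 2 ≤ ‖e‖ ^ 2 := by rw [← sq_abs]; gcongr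
    refine abs_lt_of_sq_lt_sq ?_ (norm_nonneg e)
    nlinarith [mul_le_mul_of_nonneg_left hv2 (mul_nonneg ht.le ht.le)]
  · calc |e x - t * v x| ≤ |e x| + t * |v x| :=
          (abs_sub _ _).trans_eq (by rw [abs_mul, abs_of_pos ht])
      _ ≤ ‖e‖ - m + t * M := by gcongr; linarith
      _ < ‖e‖ := by nlinarith

theorem extremalSet_sub_midpoint_subset {h p₁ p₂ : C(X, ℝ)}
    (h₁ : ‖h - p₁‖ ≤ ‖h - ((2⁻¹ : ℝ) • p₁ + (2⁻¹ : ℝ) • p₂)‖)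
    (h₂ : ‖h - p₂‖ ≤ ‖h - ((2⁻¹ : ℝ) • p₁ + (2⁻¹ : ℝ) • p₂)‖) :
    extremalSet (h - ((2⁻¹ : ℝ) • p₁ + (2⁻¹ : ℝ) • p₂)) ⊆ {x | p₁ x = p₂ x} := by
  intro x hx
  have ha : |h x - p₁ x| ≤ ‖h - p₁‖ := (h - p₁).norm_coe_le_norm x
  have hb : |h x - p₂ x| ≤ ‖h - p₂‖ := (h - p₂).norm_coe_le_norm x
  have hm : |(h x - p₁ x + (h x - p₂ x)) / 2| = ‖h - ((2⁻¹ : ℝ) • p₁ + (2⁻¹ : ℝ) • p₂)‖ := by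
    rw [← hx]; congr 1
    simp only [ContinuousMap.sub_apply, ContinuousMap.add_apply, ContinuousMap.smul_apply,
      smul_eq_mul]
    ring
  rw [abs_div, abs_two] at hm
  rcases abs_le.1 (ha.trans h₁) with ⟨ha₁, ha₂⟩
  rcases abs_le.1 (hb.trans h₂) with ⟨hb₁, hb₂⟩
  show p₁ x = p₂ x
  rcases abs_cases (h x - p₁ x + (h x - p₂ x)) with ⟨hs, -⟩ | ⟨hs, -⟩ <;> linarith

end Extremal

local notation "𝕀" => Set.Icc (0 : ℝ) 1

noncomputable def polySubmodule (n : ℕ) : Submodule ℝ C(𝕀, ℝ) :=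
  (Polynomial.degreeLE ℝ n).map (Polynomial.toContinuousMapOnAlgHom 𝕀).toLinearMap

theorem coe_polySubmodule (n : ℕ) : (polySubmodule n : Set C(𝕀, ℝ)) = polySet n := by
  ext p
  simp [polySubmodule, polySet, Polynomial.mem_degreeLE, ContinuousMap.ext_iff, eq_comm]

theorem exists_mem_polySet_eqOn {n : ℕ} (s : Finset 𝕀) (hs : s.card ≤ n + 1) (φ : C(𝕀, ℝ)) :
    ∃ v ∈ polySet n, ∀ x ∈ s, v x = φ x := by
  have hinj : Set.InjOn (fun x : 𝕀 => (x : ℝ)) s := Subtype.val_injective.injOn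
  set F := Lagrange.interpolate s (fun x : 𝕀 => (x : ℝ)) fun x => φ x
  have hF : F ∈ Polynomial.degreeLT ℝ (n + 1) :=
    Polynomial.mem_degreeLT.2 <|
      (Lagrange.degree_interpolate_lt _ hinj).trans_le (by exact_mod_cast hs)
  rw [Polynomial.degreeLT_succ_eq_degreeLE, Polynomial.mem_degreeLE] at hF
  exact ⟨F.toContinuousMapOn 𝕀, ⟨F, hF, fun _ => rfl⟩,
    fun x hx => Lagrange.eval_interpolate_at_node _ hinj hx⟩

theorem exists_finset_card_le_setOf_eq_subset {n : ℕ} {p₁ p₂ : C(𝕀, ℝ)} (h₁ : p₁ ∈ polySet n)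
    (h₂ : p₂ ∈ polySet n) (hne : p₁ ≠ p₂) :
    ∃ s : Finset 𝕀, s.card ≤ n ∧ {x | p₁ x = p₂ x} ⊆ s := by
  obtain ⟨q₁, hq₁, hp₁⟩ := h₁
  obtain ⟨q₂, hq₂, hp₂⟩ := h₂
  set q := q₁ - q₂
  have hq : q ≠ 0 := fun h => hne <| ContinuousMap.ext fun x => by
    rw [hp₁, hp₂, sub_eq_zero.1 h]
  have hdeg : q.natDegree ≤ n :=
    Polynomial.natDegree_le_iff_degree_le.2 ((Polynomial.degree_sub_le _ _).trans (max_le hq₁ hq₂))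
  refine ⟨q.roots.toFinset.subtype (· ∈ 𝕀), ?_, fun x hx => ?_⟩
  · calc (q.roots.toFinset.subtype (· ∈ 𝕀)).card ≤ q.roots.toFinset.card := by
          rw [Finset.card_subtype]; exact Finset.card_filter_le _ _
      _ ≤ Multiset.card q.roots := Multiset.toFinset_card_le _
      _ ≤ n := (Polynomial.card_roots' q).trans hdeg
  · have hx : p₁ x = p₂ x := hx
    simp [Finset.mem_subtype, Polynomial.mem_roots hq, q, ← hp₁, ← hp₂, hx]

theorem IsBestApprox.not_extremalSet_subset {n : ℕ} {h p : C(𝕀, ℝ)}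
    (hp : IsBestApprox (polySet n) h p) (s : Finset 𝕀) (hs : s.card ≤ n) :
    ¬ extremalSet (h - p) ⊆ s := by
  intro hsub
  have he : h - p ≠ 0 := by
    intro h0
    have huniv : Set.univ ⊆ (s : Set 𝕀) := fun x _ => hsub (by simp [extremalSet, h0])
    exact Set.infinite_univ_iff.2 (Set.Icc_infinite zero_lt_one).to_subtype
      (s.finite_toSet.subset huniv)
  obtain ⟨v, hv, hve⟩ := exists_mem_polySet_eqOn (n := n) s (by omega) (h - p)
  obtain ⟨t, -, ht⟩ := exists_norm_sub_smul_lt (h - p) v fun x hx => by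
    rw [hve x (hsub hx), ← sq, ← sq_abs, hx]; exact pow_pos (norm_pos_iff.2 he) 2
  have hmem : p + t • v ∈ polySet n := by
    rw [← coe_polySubmodule] at hp hv ⊢
    exact (polySubmodule n).add_mem hp.1 ((polySubmodule n).smul_mem t hv)
  have := hp.2 _ hmem
  rw [show h - (p + t • v) = h - p - t • v by abel] at this
  exact ht.not_ge this

theorem IsBestApprox.eq_of_polySet {n : ℕ} {h p₁ p₂ : C(𝕀, ℝ)}
    (h₁ : IsBestApprox (polySet n) h p₁) (h₂ : IsBestApprox (polySet n) h p₂) : p₁ = p₂ := by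
  by_contra hne
  obtain ⟨s, hs, hsub⟩ := exists_finset_card_le_setOf_eq_subset h₁.1 h₂.1 hne
  have hconv : Convex ℝ (polySet n) := coe_polySubmodule n ▸ (polySubmodule n).convex
  have hm := h₁.smul_add_smul hconv h₂ (a := 2⁻¹) (b := 2⁻¹)
    (by norm_num) (by norm_num) (by norm_num)
  exact hm.not_extremalSet_subset s hs <|
    (extremalSet_sub_midpoint_subset (h₁.2 _ hm.1) (h₂.2 _ hm.1)).trans hsub

theorem inCoderivP.apply_sub_nonneg {P : C(𝕀, ℝ) → C(𝕀, ℝ)} {f : C(𝕀, ℝ)}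
    {γ μ : C(𝕀, ℝ) →L[ℝ] ℝ} (hco : inCoderivP P f γ μ)
    (hP : ∀ᶠ s in 𝓝[>] (0 : ℝ), P (f - s • (f - P f)) = P f) : 0 ≤ γ (f - P f) := by
  set e := f - P f
  have key : ∀ ε > 0, -γ e ≤ ε * ‖e‖ := by
    intro ε hε
    obtain ⟨δ, hδ, hineq⟩ := hco ε hε
    have hsmall : ∀ᶠ s in 𝓝[>] (0 : ℝ), ‖s • e‖ < δ := by
      have : Continuous fun s : ℝ => ‖s • e‖ := by fun_prop
      replace : Tendsto (fun s : ℝ => ‖s • e‖) (𝓝 0) (𝓝 0) := by simpa using this.tendsto 0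
      exact nhdsWithin_le_nhds (this.eventually (gt_mem_nhds hδ))
    obtain ⟨s, hs : 0 < s, hsδ, hPs⟩ := (eventually_mem_nhdsWithin.and (hsmall.and hP)).exists
    have := hineq (f - s • e) (by rwa [sub_sub_cancel_left, norm_neg])
    rw [hPs, sub_self, sub_sub_cancel_left, map_neg, map_smul, map_zero, norm_zero, norm_neg,
      norm_smul, Real.norm_of_nonneg hs.le] at this
    simp only [smul_eq_mul, sub_zero, add_zero] at this
    nlinarith
  have hlim : Tendsto (fun ε : ℝ => ε * ‖e‖) (𝓝[>] 0) (𝓝 0) := by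
    have : Continuous fun ε : ℝ => ε * ‖e‖ := by fun_prop
    simpa using (this.tendsto 0).mono_left nhdsWithin_le_nhds
  linarith [ge_of_tendsto hlim (eventually_mem_nhdsWithin.mono key)]

theorem stmt_18_general (n : ℕ)
    (P : C(Set.Icc (0 : ℝ) 1, ℝ) → C(Set.Icc (0 : ℝ) 1, ℝ))
    (hP : ∀ g, P g ∈ polySet n ∧ ∀ q ∈ polySet n, ‖g - P g‖ ≤ ‖g - q‖)
    (f : C(Set.Icc (0 : ℝ) 1, ℝ))
    (γ : C(Set.Icc (0 : ℝ) 1, ℝ) →L[ℝ] ℝ) (hγ : γ (f - P f) < 0) :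
    ∀ μ : C(Set.Icc (0 : ℝ) 1, ℝ) →L[ℝ] ℝ, ¬ inCoderivP P f γ μ := by
  intro μ hco
  have hconst (s : ℝ) : P (f - s • (f - P f)) = P f := by
    have hray : IsBestApprox (polySet n) (P f + (1 - s) • (f - P f)) (P f) := by
      rw [← coe_polySubmodule] at hP ⊢
      exact IsBestApprox.add_smul_sub (hP f) (1 - s)
    rw [show P f + (1 - s) • (f - P f) = f - s • (f - P f) by module] at hray
    exact IsBestApprox.eq_of_polySet (hP _) hray
  exact hγ.not_ge (hco.apply_sub_nonneg (Eventually.of_forall hconst))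

/-- Theorem 5.10 (iii). Let `n` be a positive integer, `f ∈ C[0,1]`,
`p = P_{𝒫ₙ}(f)` its (unique) best approximation from `𝒫ₙ`, and let `γ` be a continuous
linear functional on `C[0,1]` with `⟨γ, f − p⟩ < 0`. Then for every continuous linear
functional `μ` on `C[0,1]`, `γ ∉ D̂*P_{𝒫ₙ}(f, p)(μ)`. -/
theorem stmt_18 (n : ℕ) (hn : 0 < n)
    (P : C(Set.Icc (0 : ℝ) 1, ℝ) → C(Set.Icc (0 : ℝ) 1, ℝ))
    (hP : ∀ g, P g ∈ polySet n ∧ ∀ q ∈ polySet n, ‖g - P g‖ ≤ ‖g - q‖)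
    (f : C(Set.Icc (0 : ℝ) 1, ℝ))
    (γ : C(Set.Icc (0 : ℝ) 1, ℝ) →L[ℝ] ℝ) (hγ : γ (f - P f) < 0) :
    ∀ μ : C(Set.Icc (0 : ℝ) 1, ℝ) →L[ℝ] ℝ, ¬ inCoderivP P f γ μ :=
  stmt_18_general n P hP f γ hγ
end
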